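/- If Γ is an invertible complex d×d matrix, Q is a nontrivial orthogonal projector on ℂ^d (Q ≠ 0 and Q ≠ 1), then the product projector 1 ⊗ Q does not commute with vec(Γ)·vec(Γ)ᴴ; symmetrically, for nontrivial P, the projector P ⊗ 1 does not commute with vec(Γ)·vec(Γ)ᴴ. That is, the whole-system property vec(Γ)·vec(Γ)ᴴ is incompatible with every nontrivial property of a single part. -/

import Mathlib

/-!
A property commuting with the rank-one projector onto `vec Γ` must have `vec Γ` as an
eigenvector, and being idempotent, with eigenvalue `0` or `1`. Since
`(1 ⊗ Q) vec Γ = vec (Γ Qᵀ)` and `(P ⊗ 1) vec Γ = vec (P Γ)`, this says that `Γ Qᵀ`,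
resp. `P Γ`, is `0` or `Γ`; cancelling the invertible `Γ` forces `Q`, resp. `P`,
to be `0` or `1`.
-/

open Matrix
open scoped Kronecker

/-- Vectorization of a matrix: `vec C (i,j) = C i j`. -/
def vec {m n : ℕ} (C : Matrix (Fin m) (Fin n) ℂ) : Fin m × Fin n → ℂ :=
  fun p => C p.1 p.2

section RankOne

variable {K : Type*} [Field K] {n : Type*} [Fintype n]

theorem Matrix.exists_mulVec_eq_smul_of_commute_vecMulVec {A : Matrix n n K} {v w : n → K}
    (hw : w ≠ 0) (h : Commute A (vecMulVec v w)) : ∃ c : K, A *ᵥ v = c • v := by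
  obtain ⟨j, hj⟩ := Function.ne_iff.mp hw
  refine ⟨(w ᵥ* A) j / w j, funext fun i => ?_⟩
  have hij := congrFun₂ h.eq i j
  rw [mul_vecMulVec, vecMulVec_mul, vecMulVec_apply, vecMulVec_apply] at hij
  rw [Pi.smul_apply, smul_eq_mul, div_mul_eq_mul_div, eq_div_iff hj, hij, mul_comm]

theorem IsIdempotentElem.mulVec_eq_zero_or_eq_of_mulVec_eq_smul {A : Matrix n n K}
    (hA : IsIdempotentElem A) {v : n → K} (hv : v ≠ 0) {c : K} (hc : A *ᵥ v = c • v) :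
    A *ᵥ v = 0 ∨ A *ᵥ v = v := by
  have hcc : IsIdempotentElem c := by
    apply smul_left_injective K hv
    calc (c * c) • v = A *ᵥ (A *ᵥ v) := by rw [hc, mulVec_smul, hc, smul_smul]
      _ = c • v := by rw [mulVec_mulVec, hA.eq, hc]
  rcases IsIdempotentElem.iff_eq_zero_or_one.mp hcc with rfl | rfl
  · exact .inl (by rw [hc, zero_smul])
  · exact .inr (by rw [hc, one_smul])

theorem IsIdempotentElem.mulVec_eq_zero_or_eq_of_commute_vecMulVec {A : Matrix n n K}
    (hA : IsIdempotentElem A) {v w : n → K} (hv : v ≠ 0) (hw : w ≠ 0)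
    (h : Commute A (vecMulVec v w)) : A *ᵥ v = 0 ∨ A *ᵥ v = v :=
  have ⟨_, hc⟩ := exists_mulVec_eq_smul_of_commute_vecMulVec hw h
  hA.mulVec_eq_zero_or_eq_of_mulVec_eq_smul hv hc

end RankOne

section Vec

variable {m n p q : ℕ}

theorem vec_injective : Function.Injective (_root_.vec (m := m) (n := n)) :=
  fun _ _ h => Matrix.ext fun i j => congrFun h (i, j)

theorem vec_eq_zero_iff {C : Matrix (Fin m) (Fin n) ℂ} : _root_.vec C = 0 ↔ C = 0 :=
  vec_injective.eq_iff' rfl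

theorem kronecker_mulVec_vec (A : Matrix (Fin m) (Fin p) ℂ) (B : Matrix (Fin n) (Fin q) ℂ)
    (C : Matrix (Fin p) (Fin q) ℂ) :
    (A ⊗ₖ B) *ᵥ _root_.vec C = _root_.vec (A * C * Bᵀ) := by
  ext ⟨i, j⟩
  simp only [mulVec, dotProduct, _root_.vec, kroneckerMap_apply, mul_apply, transpose_apply,
    Fintype.sum_prod_type, Finset.sum_mul]
  rw [Finset.sum_comm]
  exact Finset.sum_congr rfl fun _ _ => Finset.sum_congr rfl fun _ _ => by ring

theorem mul_mul_transpose_eq_zero_or_eq_of_commute_vecMulVec_vec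
    {A : Matrix (Fin m) (Fin m) ℂ} {B : Matrix (Fin n) (Fin n) ℂ}
    (hAB : IsIdempotentElem (A ⊗ₖ B)) {C : Matrix (Fin m) (Fin n) ℂ} (hC : C ≠ 0)
    (h : Commute (A ⊗ₖ B) (vecMulVec (_root_.vec C) (star (_root_.vec C)))) :
    A * C * Bᵀ = 0 ∨ A * C * Bᵀ = C := by
  have hv : _root_.vec C ≠ 0 := vec_eq_zero_iff.not.mpr hC
  rw [← vec_eq_zero_iff, ← vec_injective.eq_iff, ← kronecker_mulVec_vec]
  exact hAB.mulVec_eq_zero_or_eq_of_commute_vecMulVec hv (star_ne_zero.mpr hv) h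

end Vec

/-- For invertible `Γ`, the whole-system property `vec(Γ)·vec(Γ)ᴴ` is incompatible
with every nontrivial property of a single part: `1 ⊗ Q` (for nontrivial `Q`) and
`P ⊗ 1` (for nontrivial `P`) do not commute with `vec(Γ)·vec(Γ)ᴴ`. -/
theorem holism_single_part (d : ℕ) (Γ : Matrix (Fin d) (Fin d) ℂ) (hΓ : IsUnit Γ) :
    (∀ Q : Matrix (Fin d) (Fin d) ℂ, Qᴴ = Q → Q * Q = Q → Q ≠ 0 → Q ≠ 1 →
      ¬ Commute ((1 : Matrix (Fin d) (Fin d) ℂ) ⊗ₖ Q)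
        (vecMulVec (_root_.vec Γ) (star (_root_.vec Γ)))) ∧
    (∀ P : Matrix (Fin d) (Fin d) ℂ, Pᴴ = P → P * P = P → P ≠ 0 → P ≠ 1 →
      ¬ Commute (P ⊗ₖ (1 : Matrix (Fin d) (Fin d) ℂ))
        (vecMulVec (_root_.vec Γ) (star (_root_.vec Γ)))) := by
  refine ⟨fun Q _ hQ hQ0 hQ1 hcomm => ?_, fun P _ hP hP0 hP1 hcomm => ?_⟩
  · have : Nontrivial (Matrix (Fin d) (Fin d) ℂ) := nontrivial_of_ne Q 0 hQ0
    have hQQ : IsIdempotentElem ((1 : Matrix (Fin d) (Fin d) ℂ) ⊗ₖ Q) := by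
      rw [IsIdempotentElem, ← mul_kronecker_mul, one_mul, hQ]
    rcases mul_mul_transpose_eq_zero_or_eq_of_commute_vecMulVec_vec hQQ hΓ.ne_zero hcomm
      with h | h
    · rw [one_mul, hΓ.mul_right_eq_zero, transpose_eq_zero] at h
      exact hQ0 h
    · rw [one_mul, hΓ.mul_eq_left, transpose_eq_one] at h
      exact hQ1 h
  · have : Nontrivial (Matrix (Fin d) (Fin d) ℂ) := nontrivial_of_ne P 0 hP0
    have hPP : IsIdempotentElem (P ⊗ₖ (1 : Matrix (Fin d) (Fin d) ℂ)) := by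
      rw [IsIdempotentElem, ← mul_kronecker_mul, one_mul, hP]
    rcases mul_mul_transpose_eq_zero_or_eq_of_commute_vecMulVec_vec hPP hΓ.ne_zero hcomm
      with h | h
    · rw [transpose_one, mul_one, hΓ.mul_left_eq_zero] at h
      exact hP0 h
    · rw [transpose_one, mul_one, hΓ.mul_eq_right] at h
      exact hP1 h
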